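/- Let α be a Schwartz function on ℝ. Then there is a constant C such that for all b ∈ ℝ, one has ∫₀^{∞} |α(b + u)| u^{−1/2} du ≤ C ⟨b⟩^{−1/2}. -/

import Mathlib

noncomputable section
open MeasureTheory Real
open scoped ENNReal NNReal

/-- Japanese bracket `⟨m⟩ = (1 + m²)^{1/2}`. -/
def jap (m : ℝ) : ℝ := Real.sqrt (1 + m ^ 2)

lemma jap_one_le (x : ℝ) : 1 ≤ jap x := by
  have h := Real.sq_sqrt (show (0:ℝ) ≤ 1 + x ^ 2 by positivity)
  have h2 := Real.sqrt_nonneg (1 + x ^ 2)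
  rw [jap]; nlinarith
lemma jap_pos (x : ℝ) : 0 < jap x := lt_of_lt_of_le one_pos (jap_one_le x)
lemma jap_sq (x : ℝ) : jap x ^ 2 = 1 + x ^ 2 := Real.sq_sqrt (by positivity)
lemma peetre_sq (b u : ℝ) : jap b ^ 2 ≤ 2 * jap u ^ 2 * jap (b + u) ^ 2 := by
  rw [jap_sq, jap_sq, jap_sq]
  nlinarith [sq_nonneg (b + 2*u), sq_nonneg (u * (b+u)), sq_nonneg u, sq_nonneg (b+u)]

-- pointwise bound on (0,1]
lemma pt1 (α : SchwartzMap ℝ ℂ) (M b u : ℝ) (hM0 : 0 < M)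
    (hM : ∀ x : ℝ, ‖α x‖ * jap x ^ 3 ≤ M) (hu : 0 < u) (hu1 : u ≤ 1) :
    ‖α (b + u)‖ * u ^ (-(1/2) : ℝ) ≤ (2 * M * jap b ^ (-(1/2) : ℝ)) * u ^ (-(1/2) : ℝ) := by
  have hA : (0:ℝ) ≤ ‖α (b+u)‖ := norm_nonneg _
  have hj := jap_pos b
  have hjb := jap_pos (b + u)
  have hjb1 := jap_one_le (b + u)
  -- jap b ≤ 2 * jap (b+u)
  have h1 : jap b ≤ 2 * jap (b + u) := by
    have h2 : jap u ^ 2 ≤ 2 := by rw [jap_sq]; nlinarith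
    have := peetre_sq b u
    nlinarith [jap_pos b, jap_pos u]
  -- sqrt
  have h2 : Real.sqrt (jap b) ≤ Real.sqrt 2 * jap (b + u) := by
    calc Real.sqrt (jap b) ≤ Real.sqrt (2 * jap (b+u) ^ 2) := Real.sqrt_le_sqrt (by nlinarith)
      _ = Real.sqrt 2 * jap (b+u) := by
          rw [Real.sqrt_mul (by norm_num), Real.sqrt_sq hjb.le]
  have key : ‖α (b + u)‖ * Real.sqrt (jap b) ≤ 2 * M := by
    have hs2 : Real.sqrt 2 ≤ 2 := by
      nlinarith [Real.sq_sqrt (show (0:ℝ) ≤ 2 by norm_num), Real.sqrt_nonneg 2]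
    have := hM (b + u)
    have hsq1 : 1 ≤ jap (b+u) ^ 2 := by nlinarith
    have hcube : jap (b+u) ≤ jap (b+u) ^ 3 := by nlinarith
    calc ‖α (b + u)‖ * Real.sqrt (jap b) ≤ ‖α (b+u)‖ * (Real.sqrt 2 * jap (b+u)) := by
          exact mul_le_mul_of_nonneg_left h2 hA
      _ ≤ 2 * M := by nlinarith [Real.sqrt_nonneg 2, mul_le_mul_of_nonneg_left hcube hA]
  -- conclude
  have hgoal : ‖α (b + u)‖ ≤ 2 * M * jap b ^ (-(1/2) : ℝ) := by
    have hsp : 0 < Real.sqrt (jap b) := Real.sqrt_pos.2 hj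
    have hps : jap b ^ (-(1/2) : ℝ) = (Real.sqrt (jap b))⁻¹ := by
      rw [Real.rpow_neg hj.le, ← Real.sqrt_eq_rpow]
    rw [hps, ← div_eq_mul_inv, le_div_iff₀ hsp]
    exact key
  exact mul_le_mul_of_nonneg_right hgoal (Real.rpow_nonneg hu.le _)

-- pointwise bound on (1,∞)
lemma pt2 (α : SchwartzMap ℝ ℂ) (M b u : ℝ) (hM0 : 0 < M)
    (hM : ∀ x : ℝ, ‖α x‖ * jap x ^ 3 ≤ M) (hu : 1 < u) :
    ‖α (b + u)‖ * u ^ (-(1/2) : ℝ) ≤ (2 * M * jap b ^ (-(1/2) : ℝ)) * (1 + (b + u) ^ 2)⁻¹ := by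
  have hu0 : (0:ℝ) < u := lt_trans one_pos hu
  have hA : (0:ℝ) ≤ ‖α (b+u)‖ := norm_nonneg _
  have hj := jap_pos b
  have hjb := jap_pos (b + u)
  have hjb1 := jap_one_le (b + u)
  have h1 : jap b ≤ 2 * u * jap (b + u) := by
    have h2 : jap u ^ 2 ≤ 2 * u ^ 2 := by rw [jap_sq]; nlinarith
    have h3 := peetre_sq b u
    nlinarith [mul_pos (mul_pos two_pos hu0) hjb, jap_pos b, sq_nonneg (jap (b+u))]
  have h2 : Real.sqrt (jap b) ≤ Real.sqrt 2 * Real.sqrt u * jap (b + u) := by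
    calc Real.sqrt (jap b) ≤ Real.sqrt (2 * u * jap (b+u) ^ 2) := Real.sqrt_le_sqrt (by nlinarith)
      _ = Real.sqrt 2 * Real.sqrt u * jap (b+u) := by
          rw [Real.sqrt_mul (by positivity), Real.sqrt_mul (by norm_num), Real.sqrt_sq hjb.le]
  have hs2 : Real.sqrt 2 ≤ 2 := by
    nlinarith [Real.sq_sqrt (show (0:ℝ) ≤ 2 by norm_num), Real.sqrt_nonneg 2]
  have key : ‖α (b + u)‖ * Real.sqrt (jap b) * (1 + (b + u) ^ 2) ≤ 2 * M * Real.sqrt u := by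
    have hMx := hM (b + u)
    calc ‖α (b + u)‖ * Real.sqrt (jap b) * (1 + (b + u) ^ 2)
        = ‖α (b + u)‖ * Real.sqrt (jap b) * jap (b+u) ^ 2 := by rw [jap_sq]
      _ ≤ ‖α (b + u)‖ * (Real.sqrt 2 * Real.sqrt u * jap (b+u)) * jap (b+u) ^ 2 := by
          apply mul_le_mul_of_nonneg_right _ (by positivity)
          exact mul_le_mul_of_nonneg_left h2 hA
      _ = Real.sqrt 2 * Real.sqrt u * (‖α (b + u)‖ * jap (b+u) ^ 3) := by ring
      _ ≤ Real.sqrt 2 * Real.sqrt u * M := by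
          apply mul_le_mul_of_nonneg_left hMx (by positivity)
      _ ≤ 2 * M * Real.sqrt u := by nlinarith [mul_nonneg (mul_nonneg (sub_nonneg.2 hs2) hM0.le) (Real.sqrt_nonneg u)]
  have hsu : (0:ℝ) < Real.sqrt u := Real.sqrt_pos.2 hu0
  have hsj : (0:ℝ) < Real.sqrt (jap b) := Real.sqrt_pos.2 hj
  have hs : (0:ℝ) < 1 + (b + u) ^ 2 := by positivity
  have hpu : u ^ (-(1/2) : ℝ) = (Real.sqrt u)⁻¹ := by
    rw [Real.rpow_neg hu0.le, ← Real.sqrt_eq_rpow]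
  have hpj : jap b ^ (-(1/2) : ℝ) = (Real.sqrt (jap b))⁻¹ := by
    rw [Real.rpow_neg hj.le, ← Real.sqrt_eq_rpow]
  rw [hpu, hpj, ← div_eq_mul_inv, mul_assoc, ← mul_inv, ← div_eq_mul_inv,
    div_le_div_iff₀ hsu (by positivity)]
  nlinarith [key]
lemma schwartz_decay (α : SchwartzMap ℝ ℂ) : ∃ M : ℝ, 0 < M ∧ ∀ x : ℝ, ‖α x‖ * jap x ^ 3 ≤ M := by
  set M := 2 ^ 3 * ((Finset.Iic ((3:ℕ),(0:ℕ))).sup (fun m => SchwartzMap.seminorm ℝ m.1 m.2) α) + 1 with hM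
  have hsup : (0:ℝ) ≤ ((Finset.Iic ((3:ℕ),(0:ℕ))).sup (fun m => SchwartzMap.seminorm ℝ m.1 m.2) α) :=
    apply_nonneg _ _
  refine ⟨M, by positivity, fun x => ?_⟩
  have h := SchwartzMap.one_add_le_sup_seminorm_apply (𝕜 := ℝ) (m := ((3:ℕ),(0:ℕ))) le_rfl le_rfl α x
  rw [norm_iteratedFDeriv_zero] at h
  norm_num at h
  have hj : jap x ≤ 1 + ‖x‖ := by
    rw [jap]
    have h1 : (1:ℝ) + x ^ 2 ≤ (1 + ‖x‖) ^ 2 := by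
      rw [Real.norm_eq_abs]; nlinarith [abs_nonneg x, sq_abs x]
    calc Real.sqrt (1 + x ^ 2) ≤ Real.sqrt ((1 + ‖x‖) ^ 2) := Real.sqrt_le_sqrt h1
      _ = 1 + ‖x‖ := Real.sqrt_sq (by positivity)
  have h2 : ‖α x‖ * jap x ^ 3 ≤ (1 + ‖x‖) ^ 3 * ‖α x‖ := by
    rw [mul_comm]; gcongr; exact (jap_pos x).le
  simp only [Real.norm_eq_abs] at h2 hj ⊢
  linarith

/-- For a Schwartz function `α`, `∫₀^∞ |α(b + u)| u^{-1/2} du ≤ C ⟨b⟩^{-1/2}` uniformly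
in `b ∈ ℝ`. -/
theorem int_schwartz_inv_sqrt (α : SchwartzMap ℝ ℂ) :
    ∃ C : ℝ, 0 < C ∧ ∀ b : ℝ,
      (∫⁻ u in Set.Ioi (0 : ℝ), ENNReal.ofReal (‖α (b + u)‖ * u ^ (-(1 / 2) : ℝ))) ≤
        ENNReal.ofReal (C * jap b ^ (-(1 / 2) : ℝ)) := by
  obtain ⟨M, hM0, hM⟩ := schwartz_decay α
  set K₁ : ℝ := ∫ u in Set.Ioc (0:ℝ) 1, u ^ (-(1/2) : ℝ) with hK₁
  have hK₁nn : 0 ≤ K₁ :=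
    setIntegral_nonneg measurableSet_Ioc fun u hu => Real.rpow_nonneg hu.1.le _
  refine ⟨2 * M * (K₁ + π), mul_pos (by linarith) (by linarith [Real.pi_pos]), fun b => ?_⟩
  set cb := 2 * M * jap b ^ (-(1/2) : ℝ) with hcb
  have hcb0 : 0 ≤ cb :=
    mul_nonneg (by linarith) (Real.rpow_nonneg (jap_pos b).le _)
  have hint : IntegrableOn (fun u : ℝ => u ^ (-(1/2) : ℝ)) (Set.Ioc 0 1) := by
    have h := intervalIntegral.intervalIntegrable_rpow' (a := (0:ℝ)) (b := 1)
      (show (-1:ℝ) < -(1/2) by norm_num)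
    rwa [intervalIntegrable_iff_integrableOn_Ioc_of_le zero_le_one] at h
  have p1 : (∫⁻ u in Set.Ioc (0:ℝ) 1, ENNReal.ofReal (‖α (b + u)‖ * u ^ (-(1/2) : ℝ))) ≤
      ENNReal.ofReal cb * ENNReal.ofReal K₁ := by
    have hmeas : Measurable fun u : ℝ =>
        ENNReal.ofReal cb * ENNReal.ofReal (u ^ (-(1/2) : ℝ)) := by fun_prop
    calc (∫⁻ u in Set.Ioc (0:ℝ) 1, ENNReal.ofReal (‖α (b + u)‖ * u ^ (-(1/2) : ℝ)))
        ≤ ∫⁻ u in Set.Ioc (0:ℝ) 1, ENNReal.ofReal cb * ENNReal.ofReal (u ^ (-(1/2) : ℝ)) := by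
          refine setLIntegral_mono hmeas fun u hu => ?_
          rw [← ENNReal.ofReal_mul hcb0]
          exact ENNReal.ofReal_le_ofReal (pt1 α M b u hM0 hM hu.1 hu.2)
      _ = ENNReal.ofReal cb * ∫⁻ u in Set.Ioc (0:ℝ) 1, ENNReal.ofReal (u ^ (-(1/2) : ℝ)) :=
          lintegral_const_mul' _ _ ENNReal.ofReal_ne_top
      _ = ENNReal.ofReal cb * ENNReal.ofReal K₁ := by
          rw [← ofReal_integral_eq_lintegral_ofReal hint
            ((ae_restrict_mem measurableSet_Ioc).mono fun u hu => Real.rpow_nonneg hu.1.le _)]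
  have p2 : (∫⁻ u in Set.Ioi (1:ℝ), ENNReal.ofReal (‖α (b + u)‖ * u ^ (-(1/2) : ℝ))) ≤
      ENNReal.ofReal cb * ENNReal.ofReal π := by
    have hmeas : Measurable fun u : ℝ =>
        ENNReal.ofReal cb * ENNReal.ofReal ((1 + (b + u) ^ 2)⁻¹) := by fun_prop
    calc (∫⁻ u in Set.Ioi (1:ℝ), ENNReal.ofReal (‖α (b + u)‖ * u ^ (-(1/2) : ℝ)))
        ≤ ∫⁻ u in Set.Ioi (1:ℝ), ENNReal.ofReal cb * ENNReal.ofReal ((1 + (b + u) ^ 2)⁻¹) := by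
          refine setLIntegral_mono hmeas fun u hu => ?_
          rw [← ENNReal.ofReal_mul hcb0]
          exact ENNReal.ofReal_le_ofReal (pt2 α M b u hM0 hM hu)
      _ = ENNReal.ofReal cb * ∫⁻ u in Set.Ioi (1:ℝ), ENNReal.ofReal ((1 + (b + u) ^ 2)⁻¹) :=
          lintegral_const_mul' _ _ ENNReal.ofReal_ne_top
      _ ≤ ENNReal.ofReal cb * ∫⁻ u : ℝ, ENNReal.ofReal ((1 + (b + u) ^ 2)⁻¹) := by
          gcongr
          exact Measure.restrict_le_self
      _ = ENNReal.ofReal cb * ∫⁻ x : ℝ, ENNReal.ofReal ((1 + x ^ 2)⁻¹) := by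
          rw [lintegral_add_left_eq_self (fun x : ℝ => ENNReal.ofReal ((1 + x ^ 2)⁻¹)) b]
      _ = ENNReal.ofReal cb * ENNReal.ofReal π := by
          rw [← ofReal_integral_eq_lintegral_ofReal integrable_inv_one_add_sq
            (Filter.Eventually.of_forall fun x => by positivity), integral_univ_inv_one_add_sq]
  calc (∫⁻ u in Set.Ioi (0 : ℝ), ENNReal.ofReal (‖α (b + u)‖ * u ^ (-(1 / 2) : ℝ)))
      = ∫⁻ u in Set.Ioc (0:ℝ) 1 ∪ Set.Ioi 1,
          ENNReal.ofReal (‖α (b + u)‖ * u ^ (-(1/2) : ℝ)) := by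
        rw [Set.Ioc_union_Ioi_eq_Ioi zero_le_one]
    _ ≤ (∫⁻ u in Set.Ioc (0:ℝ) 1, ENNReal.ofReal (‖α (b + u)‖ * u ^ (-(1/2) : ℝ))) +
        ∫⁻ u in Set.Ioi (1:ℝ), ENNReal.ofReal (‖α (b + u)‖ * u ^ (-(1/2) : ℝ)) :=
        lintegral_union_le _ _ _
    _ ≤ ENNReal.ofReal cb * ENNReal.ofReal K₁ + ENNReal.ofReal cb * ENNReal.ofReal π :=
        add_le_add p1 p2
    _ ≤ ENNReal.ofReal (2 * M * (K₁ + π) * jap b ^ (-(1 / 2) : ℝ)) := by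
        rw [← ENNReal.ofReal_mul hcb0, ← ENNReal.ofReal_mul hcb0,
          ← ENNReal.ofReal_add (mul_nonneg hcb0 hK₁nn) (mul_nonneg hcb0 Real.pi_pos.le)]
        exact ENNReal.ofReal_le_ofReal (le_of_eq (by rw [hcb]; ring))

end
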